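/- arXiv:2511.04466 — 2 statements merged into one kernel-verified Lean document; each statement's English description precedes it below -/
import Mathlib

section
/- (Appendix Lemma A.3, inductive step) Under the k-means setup, let φ ↦ B(φ) be any map from ℝ to stacked vectors in ℝ^{Np}, with blocks β_i(φ), and let B̂ be a fixed stacked vector with assignments ĝ_i^{(s)} := g_i^{(s)}(B̂) and weights w_i^{(s)}(k) := (Σ_{i' : ĝ_{i'}^{(s)} = k} Q_{i'})^{-1} Q_i · 1{ĝ_i^{(s)} = k}. Assume that for every φ ∈ ℝ, every i, and every iteration s under consideration, the minimizing index in the assignment step for B(φ) (and for B̂) is unique. For S̃ ≥ 1 define S_{S̃} := {φ ∈ ℝ : g_i^{(s)}(B(φ)) = ĝ_i^{(s)} for all 0 ≤ s ≤ S̃ and all i}, and define S'_{S̃} := [∩_{i,k} {φ : ‖β_i(φ) − m^{(0)}_{ĝ_i^{(0)}}(B(φ))‖²_{x̃_i} ≤ ‖β_i(φ) − m_k^{(0)}(B(φ))‖²_{x̃_i}}] ∩ [∩_{s=1}^{S̃} ∩_{i,k} {φ : ‖β_i(φ) − Σ_{i'=1}^N w_{i'}^{(s-1)}(ĝ_i^{(s)})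 β_{i'}(φ)‖²_{x̃_i} ≤ ‖β_i(φ) − Σ_{i'=1}^N w_{i'}^{(s-1)}(k) β_{i'}(φ)‖²_{x̃_i}}]. Then S_{S̃} = S'_{S̃} implies S_{S̃+1} = S'_{S̃+1}. -/
/-!
Once the assignments of `B(φ)` and `B̂` agree at step `S̃`, the step-`(S̃+1)` centroids of `B(φ)`
are the `W`-weighted sums of its blocks, with weights computed from `B̂` alone. The new inequalities
of `S'_{S̃+1}` then say that `ĝ^{(S̃+1)}_i` minimizes the distance of `β_i(φ)` to these centroids,
which by uniqueness of the minimizer is the new condition `g^{(S̃+1)}_i(B(φ)) = ĝ^{(S̃+1)}_i`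
of `S_{S̃+1}`.
-/

open Matrix
open scoped BigOperators

noncomputable section

/-- The `i`-th `p`-block of a stacked vector in `ℝ^{Np}`. -/
def blk {N p : ℕ} (B : Fin N × Fin p → ℝ) (i : Fin N) : Fin p → ℝ := fun a => B (i, a)

/-- The squared weighted norm `‖u‖²_Q = uᵀQu`. -/
def qnorm {p : ℕ} (Q : Matrix (Fin p) (Fin p) ℝ) (u : Fin p → ℝ) : ℝ := u ⬝ᵥ (Q *ᵥ u)

/-- `S_n`: the set of `φ` whose k-means assignments agree with those of `B̂` through
iteration `n`. -/
def SsetKM {N p K : ℕ} (g : ℕ → (Fin N × Fin p → ℝ) → Fin N → Fin K)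
    (Bφ : ℝ → Fin N × Fin p → ℝ) (Bhat : Fin N × Fin p → ℝ) (n : ℕ) : Set ℝ :=
  {φ : ℝ | ∀ s ≤ n, ∀ i : Fin N, g s (Bφ φ) i = g s Bhat i}

/-- `S'_n`: the set of `φ` satisfying the centroid inequalities through iteration `n`. -/
def SprimeKM {N p K : ℕ} (Q : Fin N → Matrix (Fin p) (Fin p) ℝ)
    (m : ℕ → (Fin N × Fin p → ℝ) → Fin K → Fin p → ℝ)
    (g : ℕ → (Fin N × Fin p → ℝ) → Fin N → Fin K)
    (W : ℕ → Fin K → Fin N → Matrix (Fin p) (Fin p) ℝ)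
    (Bφ : ℝ → Fin N × Fin p → ℝ) (Bhat : Fin N × Fin p → ℝ) (n : ℕ) : Set ℝ :=
  {φ : ℝ |
    (∀ (i : Fin N) (k : Fin K),
      qnorm (Q i) (blk (Bφ φ) i - m 0 (Bφ φ) (g 0 Bhat i))
        ≤ qnorm (Q i) (blk (Bφ φ) i - m 0 (Bφ φ) k))
    ∧ ∀ s : ℕ, 1 ≤ s → s ≤ n → ∀ (i : Fin N) (k : Fin K),
        qnorm (Q i) (blk (Bφ φ) i - ∑ i' : Fin N, W (s - 1) (g s Bhat i) i' *ᵥ blk (Bφ φ) i')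
          ≤ qnorm (Q i) (blk (Bφ φ) i - ∑ i' : Fin N, W (s - 1) k i' *ᵥ blk (Bφ φ) i')}

theorem eq_iff_forall_le_of_existsUnique_minimizer {α β : Type*} [LE β] {f : α → β}
    {a b : α} (ha : ∀ c, f a ≤ f c) (huniq : ∃! c, ∀ d, f c ≤ f d) :
    a = b ↔ ∀ c, f b ≤ f c :=
  ⟨by rintro rfl; exact ha, huniq.unique ha⟩

theorem sum_ite_mul_mulVec_eq_mulVec_sum_filter {ι l n o R : Type*} [Fintype n] [Fintype o]
    [NonUnitalSemiring R] (s : Finset ι) (p : ι → Prop) [DecidablePred p] (A : Matrix l n R)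
    (Q : ι → Matrix n o R) (v : ι → o → R) :
    ∑ i ∈ s, (if p i then A * Q i else 0) *ᵥ v i = A *ᵥ ∑ i ∈ s.filter p, Q i *ᵥ v i := by
  rw [Finset.sum_filter, Matrix.mulVec_sum]
  refine Finset.sum_congr rfl fun i _ => ?_
  split_ifs <;> simp [Matrix.mulVec_mulVec]

section KMeans

variable {N p K : ℕ} {Q : Fin N → Matrix (Fin p) (Fin p) ℝ}
  {m : ℕ → (Fin N × Fin p → ℝ) → Fin K → Fin p → ℝ} {g : ℕ → (Fin N × Fin p → ℝ) → Fin N → Fin K}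
  {W : ℕ → Fin K → Fin N → Matrix (Fin p) (Fin p) ℝ} {Bφ : ℝ → Fin N × Fin p → ℝ}
  {Bhat : Fin N × Fin p → ℝ}

theorem SsetKM_succ (n : ℕ) :
    SsetKM g Bφ Bhat (n + 1) =
      SsetKM g Bφ Bhat n ∩ {φ | ∀ i, g (n + 1) (Bφ φ) i = g (n + 1) Bhat i} := by
  ext φ
  simp only [SsetKM, Set.mem_inter_iff, Set.mem_ofPred_eq, Nat.le_succ_iff, or_imp, forall_and,
    forall_eq]

theorem SprimeKM_succ (n : ℕ) :
    SprimeKM Q m g W Bφ Bhat (n + 1) =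
      SprimeKM Q m g W Bφ Bhat n ∩ {φ | ∀ (i : Fin N) (k : Fin K),
        qnorm (Q i) (blk (Bφ φ) i - ∑ i', W n (g (n + 1) Bhat i) i' *ᵥ blk (Bφ φ) i')
          ≤ qnorm (Q i) (blk (Bφ φ) i - ∑ i', W n k i' *ᵥ blk (Bφ φ) i')} := by
  ext φ
  simp only [SprimeKM, Set.mem_inter_iff, Set.mem_ofPred_eq, and_assoc]
  refine and_congr_right' ⟨fun h => ⟨fun s h1 hs => h s h1 (Nat.le_succ_of_le hs),
    h (n + 1) le_add_self le_rfl⟩, fun ⟨h, hlast⟩ s h1 hs => ?_⟩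
  rcases Nat.le_succ_iff.1 hs with hs | rfl
  exacts [h s h1 hs, hlast]

theorem sum_weight_mulVec_eq_centroid_succ {B : Fin N × Fin p → ℝ} {s : ℕ}
    (hm : ∀ k, m (s + 1) B k
      = (∑ i ∈ Finset.univ.filter (fun i => g s B i = k), Q i)⁻¹ *ᵥ
          (∑ i ∈ Finset.univ.filter (fun i => g s B i = k), Q i *ᵥ blk B i))
    (hW : ∀ (k : Fin K) (i : Fin N), W s k i = if g s Bhat i = k
      then (∑ j ∈ Finset.univ.filter (fun j => g s Bhat j = k), Q j)⁻¹ * Q i else 0)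
    (hg : ∀ i, g s B i = g s Bhat i) (k : Fin K) :
    ∑ i, W s k i *ᵥ blk B i = m (s + 1) B k := by
  simp only [hW, hm, hg, sum_ite_mul_mulVec_eq_mulVec_sum_filter]

end KMeans

theorem kmeans_set_characterization_inductive_step_general
    (N p K : ℕ)
    (Q : Fin N → Matrix (Fin p) (Fin p) ℝ)
    (m : ℕ → (Fin N × Fin p → ℝ) → Fin K → Fin p → ℝ)
    (g : ℕ → (Fin N × Fin p → ℝ) → Fin N → Fin K)
    (Bφ : ℝ → Fin N × Fin p → ℝ)
    (Bhat : Fin N × Fin p → ℝ)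
    (St : ℕ)
    -- centroid update rule
    (hmsucc : ∀ B : Fin N × Fin p → ℝ, (B = Bhat ∨ ∃ φ : ℝ, B = Bφ φ) →
      ∀ (s : ℕ) (k : Fin K),
        m (s + 1) B k
          = (∑ i ∈ Finset.univ.filter (fun i => g s B i = k), Q i)⁻¹ *ᵥ
              (∑ i ∈ Finset.univ.filter (fun i => g s B i = k), Q i *ᵥ blk B i))
    -- `g s B i` minimizes the weighted distance to the step-`s` centroids
    (hgmin : ∀ B : Fin N × Fin p → ℝ, (B = Bhat ∨ ∃ φ : ℝ, B = Bφ φ) →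
      ∀ s ≤ St + 1, ∀ (i : Fin N) (k : Fin K),
        qnorm (Q i) (blk B i - m s B (g s B i)) ≤ qnorm (Q i) (blk B i - m s B k))
    -- the minimizing index is unique at every iteration under consideration
    (huniq : ∀ B : Fin N × Fin p → ℝ, (B = Bhat ∨ ∃ φ : ℝ, B = Bφ φ) →
      ∀ s ≤ St + 1, ∀ i : Fin N, ∃! k : Fin K, ∀ k₂ : Fin K,
        qnorm (Q i) (blk B i - m s B k) ≤ qnorm (Q i) (blk B i - m s B k₂))
    -- the weight matrices computed from the clusters of `B̂`
    (W : ℕ → Fin K → Fin N → Matrix (Fin p) (Fin p) ℝ)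
    (hW : ∀ (s : ℕ) (k : Fin K) (i : Fin N),
      W s k i = if g s Bhat i = k
        then (∑ j ∈ Finset.univ.filter (fun j => g s Bhat j = k), Q j)⁻¹ * Q i else 0)
    -- inductive hypothesis
    (hind : SsetKM g Bφ Bhat St = SprimeKM Q m g W Bφ Bhat St) :
    SsetKM g Bφ Bhat (St + 1) = SprimeKM Q m g W Bφ Bhat (St + 1) := by
  ext φ
  rw [SsetKM_succ, SprimeKM_succ, hind]
  refine and_congr_right fun hφ => forall_congr' fun i => ?_
  have hagree : ∀ i, g St (Bφ φ) i = g St Bhat i := by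
    rw [← hind] at hφ
    exact hφ St le_rfl
  have hBφ : Bφ φ = Bhat ∨ ∃ φ', Bφ φ = Bφ φ' := Or.inr ⟨φ, rfl⟩
  simp only [sum_weight_mulVec_eq_centroid_succ (hmsucc _ hBφ St) (hW St) hagree]
  exact eq_iff_forall_le_of_existsUnique_minimizer
    (hgmin _ hBφ (St + 1) le_rfl i) (huniq _ hBφ (St + 1) le_rfl i)

/-- **Appendix Lemma A.3, inductive step.** If the characterization
`S_{S̃} = S'_{S̃}` holds, it also holds at the next iteration: `S_{S̃+1} = S'_{S̃+1}`. -/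
theorem kmeans_set_characterization_inductive_step
    (N T p K : ℕ) (hN : 0 < N) (hT : 0 < T) (hp : 0 < p) (hK : 0 < K)
    (x : Fin N → Matrix (Fin T) (Fin p) ℝ)
    (Q : Fin N → Matrix (Fin p) (Fin p) ℝ)
    (hQdef : ∀ i, Q i = (x i)ᵀ * x i) (hQpd : ∀ i, (Q i).PosDef)
    (cseed : Fin K → Fin N)
    (m : ℕ → (Fin N × Fin p → ℝ) → Fin K → Fin p → ℝ)
    (g : ℕ → (Fin N × Fin p → ℝ) → Fin N → Fin K)
    (Bφ : ℝ → Fin N × Fin p → ℝ)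
    (Bhat : Fin N × Fin p → ℝ)
    (St : ℕ) (hSt : 1 ≤ St)
    -- initial centroids are the blocks at the seed indices
    (hm0 : ∀ B : Fin N × Fin p → ℝ, (B = Bhat ∨ ∃ φ : ℝ, B = Bφ φ) →
      ∀ k : Fin K, m 0 B k = blk B (cseed k))
    -- centroid update rule
    (hmsucc : ∀ B : Fin N × Fin p → ℝ, (B = Bhat ∨ ∃ φ : ℝ, B = Bφ φ) →
      ∀ (s : ℕ) (k : Fin K),
        m (s + 1) B k
          = (∑ i ∈ Finset.univ.filter (fun i => g s B i = k), Q i)⁻¹ *ᵥ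
              (∑ i ∈ Finset.univ.filter (fun i => g s B i = k), Q i *ᵥ blk B i))
    -- `g s B i` minimizes the weighted distance to the step-`s` centroids
    (hgmin : ∀ B : Fin N × Fin p → ℝ, (B = Bhat ∨ ∃ φ : ℝ, B = Bφ φ) →
      ∀ s ≤ St + 1, ∀ (i : Fin N) (k : Fin K),
        qnorm (Q i) (blk B i - m s B (g s B i)) ≤ qnorm (Q i) (blk B i - m s B k))
    -- the minimizing index is unique at every iteration under consideration
    (huniq : ∀ B : Fin N × Fin p → ℝ, (B = Bhat ∨ ∃ φ : ℝ, B = Bφ φ) →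
      ∀ s ≤ St + 1, ∀ i : Fin N, ∃! k : Fin K, ∀ k₂ : Fin K,
        qnorm (Q i) (blk B i - m s B k) ≤ qnorm (Q i) (blk B i - m s B k₂))
    -- the cluster Gram-sum matrices are invertible
    (hinv : ∀ B : Fin N × Fin p → ℝ, (B = Bhat ∨ ∃ φ : ℝ, B = Bφ φ) →
      ∀ s ≤ St, ∀ k : Fin K,
        IsUnit (∑ i ∈ Finset.univ.filter (fun i => g s B i = k), Q i).det)
    -- the weight matrices computed from the clusters of `B̂`
    (W : ℕ → Fin K → Fin N → Matrix (Fin p) (Fin p) ℝ)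
    (hW : ∀ (s : ℕ) (k : Fin K) (i : Fin N),
      W s k i = if g s Bhat i = k
        then (∑ j ∈ Finset.univ.filter (fun j => g s Bhat j = k), Q j)⁻¹ * Q i else 0)
    -- inductive hypothesis
    (hind : SsetKM g Bφ Bhat St = SprimeKM Q m g W Bφ Bhat St) :
    SsetKM g Bφ Bhat (St + 1) = SprimeKM Q m g W Bφ Bhat (St + 1) :=
  kmeans_set_characterization_inductive_step_general N p K Q m g Bφ Bhat St hmsucc hgmin huniq W hW
    hind

end
end

section
/- (Theorem 3.2) Under the k-means setup, let φ ↦ B(φ) be any map from ℝ to stacked vectors in ℝ^{Np}, with blocks β_i(φ), let B̂ be a fixed stacked vector with assignments ĝ_i^{(s)} := g_i^{(s)}(B̂) and weights w_i^{(s)}(k) := (Σ_{i' : ĝ_{i'}^{(s)} = k} Q_{i'})^{-1} Q_i · 1{ĝ_i^{(s)} = k}, and let S ≥ 1 be a fixed number of iterations. Assume that for every φ ∈ ℝ, every i, and every 0 ≤ s ≤ S, the minimizing index in the assignment step for B(φ) (and for B̂) is unique. Then the set {φ ≥ 0 : g_i^{(s)}(B(φ)) = ĝ_i^{(s)} for all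 0 ≤ s ≤ S and all i ∈ {1,…,N}} equals the intersection of: (1) {φ ≥ 0}, (2) ∩_{i=1}^N ∩_{k=1}^K {φ : ‖β_i(φ) − m^{(0)}_{ĝ_i^{(0)}}(B(φ))‖²_{x̃_i} ≤ ‖β_i(φ) − m_k^{(0)}(B(φ))‖²_{x̃_i}}, and (3) ∩_{s=1}^S ∩_{i=1}^N ∩_{k=1}^K {φ : ‖β_i(φ) − Σ_{i'=1}^N w_{i'}^{(s-1)}(ĝ_i^{(s)}) β_{i'}(φ)‖²_{x̃_i} ≤ ‖β_i(φ) − Σ_{i'=1}^N w_{i'}^{(s-1)}(k) β_{i'}(φ)‖²_{x̃_i}}. -/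
/-!
Suppose the assignments of `B(φ)` agree with those of `B̂` at every step before `s ≥ 1`. Then the
clusters of `B(φ)` at step `s - 1` are those of `B̂`, so each centroid `m_k^{(s)}(B(φ))` is the
`B̂`-weighted average `∑ w^{(s-1)}(k) β_{i'}(φ)`. Since `g_i^{(s)}(B(φ))` is the unique minimiser of
the distance to these centroids, it equals `ĝ_i^{(s)}` exactly when `ĝ_i^{(s)}` is a minimiser too,
which is the step-`s` inequality. Induction on `s` gives the equality of the two sets.
-/

open Matrix
open scoped BigOperators

noncomputable section

theorem eq_iff_forall_le_of_existsUnique {α β : Type*} [LE β] {f : α → β} {a b : α}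
    (hu : ∃! k, ∀ k', f k ≤ f k') (ha : ∀ k, f a ≤ f k) : a = b ↔ ∀ k, f b ≤ f k :=
  ⟨by rintro rfl; exact ha, fun hb => hu.unique ha hb⟩

theorem forall_le_iff_of_iff_of_forall_lt {P : ℕ → Prop} {R₀ : Prop} {R : ℕ → Prop} {S : ℕ}
    (h₀ : P 0 ↔ R₀) (h : ∀ s, 1 ≤ s → s ≤ S → (∀ t < s, P t) → (P s ↔ R s)) :
    (∀ s ≤ S, P s) ↔ R₀ ∧ ∀ s, 1 ≤ s → s ≤ S → R s := by
  refine ⟨fun hP => ⟨h₀.1 (hP 0 S.zero_le),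
    fun s hs hsS => (h s hs hsS fun t ht => hP t (by omega)).1 (hP s hsS)⟩, ?_⟩
  rintro ⟨hR₀, hR⟩ s
  induction s using Nat.strong_induction_on with
  | _ s ih =>
    intro hsS
    rcases Nat.eq_zero_or_pos s with rfl | hs
    · exact h₀.2 hR₀
    · exact (h s hs hsS fun t ht => ih t ht (by omega)).2 (hR s hs hsS)

theorem sum_ite_mul_mulVec {R ι κ n : Type*} [CommSemiring R] [Fintype ι] [Fintype n]
    [DecidableEq κ] (c : ι → κ) (k : κ) (A : Matrix n n R) (Q : ι → Matrix n n R)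
    (v : ι → n → R) :
    ∑ i, (if c i = k then A * Q i else 0) *ᵥ v i
      = A *ᵥ ∑ i ∈ Finset.univ.filter (fun i => c i = k), Q i *ᵥ v i := by
  simp only [Finset.sum_filter, mulVec_sum]
  refine Finset.sum_congr rfl fun i _ => ?_
  split_ifs <;> simp [mulVec_mulVec]

section

variable {N p K : ℕ} (Q : Fin N → Matrix (Fin p) (Fin p) ℝ)
  (m : ℕ → (Fin N × Fin p → ℝ) → Fin K → Fin p → ℝ)
  (g : ℕ → (Fin N × Fin p → ℝ) → Fin N → Fin K)
  (W : ℕ → Fin K → Fin N → Matrix (Fin p) (Fin p) ℝ)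
  (B Bhat : Fin N × Fin p → ℝ)

theorem assignment_eq_iff_forall_le (s : ℕ)
    (hgmin : ∀ (i : Fin N) (k : Fin K),
      qnorm (Q i) (blk B i - m s B (g s B i)) ≤ qnorm (Q i) (blk B i - m s B k))
    (huniq : ∀ i : Fin N, ∃! k : Fin K, ∀ k₂ : Fin K,
      qnorm (Q i) (blk B i - m s B k) ≤ qnorm (Q i) (blk B i - m s B k₂)) :
    (∀ i, g s B i = g s Bhat i) ↔ ∀ (i : Fin N) (k : Fin K),
      qnorm (Q i) (blk B i - m s B (g s Bhat i)) ≤ qnorm (Q i) (blk B i - m s B k) :=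
  forall_congr' fun i => eq_iff_forall_le_of_existsUnique (huniq i) (hgmin i)

theorem centroid_succ_eq_weighted_sum (t : ℕ)
    (hmsucc : ∀ k : Fin K, m (t + 1) B k
      = (∑ i ∈ Finset.univ.filter (fun i => g t B i = k), Q i)⁻¹ *ᵥ
          (∑ i ∈ Finset.univ.filter (fun i => g t B i = k), Q i *ᵥ blk B i))
    (hW : ∀ (k : Fin K) (i : Fin N), W t k i = if g t Bhat i = k
      then (∑ j ∈ Finset.univ.filter (fun j => g t Bhat j = k), Q j)⁻¹ * Q i else 0)
    (hagree : ∀ i, g t B i = g t Bhat i) (k : Fin K) :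
    m (t + 1) B k = ∑ i, W t k i *ᵥ blk B i := by
  simp only [hmsucc, hW, hagree, sum_ite_mul_mulVec]

theorem assignments_agree_iff (S : ℕ)
    (hmsucc : ∀ (s : ℕ) (k : Fin K), m (s + 1) B k
      = (∑ i ∈ Finset.univ.filter (fun i => g s B i = k), Q i)⁻¹ *ᵥ
          (∑ i ∈ Finset.univ.filter (fun i => g s B i = k), Q i *ᵥ blk B i))
    (hgmin : ∀ s ≤ S, ∀ (i : Fin N) (k : Fin K),
      qnorm (Q i) (blk B i - m s B (g s B i)) ≤ qnorm (Q i) (blk B i - m s B k))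
    (huniq : ∀ s ≤ S, ∀ i : Fin N, ∃! k : Fin K, ∀ k₂ : Fin K,
      qnorm (Q i) (blk B i - m s B k) ≤ qnorm (Q i) (blk B i - m s B k₂))
    (hW : ∀ (s : ℕ) (k : Fin K) (i : Fin N), W s k i = if g s Bhat i = k
      then (∑ j ∈ Finset.univ.filter (fun j => g s Bhat j = k), Q j)⁻¹ * Q i else 0) :
    (∀ s ≤ S, ∀ i, g s B i = g s Bhat i) ↔
      (∀ (i : Fin N) (k : Fin K),
        qnorm (Q i) (blk B i - m 0 B (g 0 Bhat i)) ≤ qnorm (Q i) (blk B i - m 0 B k))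
      ∧ ∀ s : ℕ, 1 ≤ s → s ≤ S → ∀ (i : Fin N) (k : Fin K),
        qnorm (Q i) (blk B i - ∑ i' : Fin N, W (s - 1) (g s Bhat i) i' *ᵥ blk B i')
          ≤ qnorm (Q i) (blk B i - ∑ i' : Fin N, W (s - 1) k i' *ᵥ blk B i') := by
  refine forall_le_iff_of_iff_of_forall_lt
    (assignment_eq_iff_forall_le Q m g B Bhat 0 (hgmin 0 S.zero_le) (huniq 0 S.zero_le)) ?_
  rintro s hs hsS hprefix
  obtain ⟨t, rfl⟩ : ∃ t, s = t + 1 := ⟨s - 1, by omega⟩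
  have hcentroid := centroid_succ_eq_weighted_sum Q m g W B Bhat t (hmsucc t) (hW t)
    (hprefix t t.lt_succ_self)
  simpa only [Nat.add_sub_cancel, hcentroid] using
    assignment_eq_iff_forall_le Q m g B Bhat (t + 1) (hgmin _ hsS) (huniq _ hsS)

end

theorem kmeans_truncation_set_characterization_general
    (N p K : ℕ)
    (Q : Fin N → Matrix (Fin p) (Fin p) ℝ)
    (m : ℕ → (Fin N × Fin p → ℝ) → Fin K → Fin p → ℝ)
    (g : ℕ → (Fin N × Fin p → ℝ) → Fin N → Fin K)
    (Bφ : ℝ → Fin N × Fin p → ℝ)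
    (Bhat : Fin N × Fin p → ℝ)
    (S : ℕ)
    -- centroid update rule
    (hmsucc : ∀ B : Fin N × Fin p → ℝ, (B = Bhat ∨ ∃ φ : ℝ, B = Bφ φ) →
      ∀ (s : ℕ) (k : Fin K),
        m (s + 1) B k
          = (∑ i ∈ Finset.univ.filter (fun i => g s B i = k), Q i)⁻¹ *ᵥ
              (∑ i ∈ Finset.univ.filter (fun i => g s B i = k), Q i *ᵥ blk B i))
    -- `g s B i` minimizes the weighted distance to the step-`s` centroids
    (hgmin : ∀ B : Fin N × Fin p → ℝ, (B = Bhat ∨ ∃ φ : ℝ, B = Bφ φ) →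
      ∀ s ≤ S, ∀ (i : Fin N) (k : Fin K),
        qnorm (Q i) (blk B i - m s B (g s B i)) ≤ qnorm (Q i) (blk B i - m s B k))
    -- the minimizing index is unique at every iteration `0 ≤ s ≤ S`
    (huniq : ∀ B : Fin N × Fin p → ℝ, (B = Bhat ∨ ∃ φ : ℝ, B = Bφ φ) →
      ∀ s ≤ S, ∀ i : Fin N, ∃! k : Fin K, ∀ k₂ : Fin K,
        qnorm (Q i) (blk B i - m s B k) ≤ qnorm (Q i) (blk B i - m s B k₂))
    -- the weight matrices computed from the clusters of `B̂`
    (W : ℕ → Fin K → Fin N → Matrix (Fin p) (Fin p) ℝ)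
    (hW : ∀ (s : ℕ) (k : Fin K) (i : Fin N),
      W s k i = if g s Bhat i = k
        then (∑ j ∈ Finset.univ.filter (fun j => g s Bhat j = k), Q j)⁻¹ * Q i else 0) :
    {φ : ℝ | 0 ≤ φ} ∩ SsetKM g Bφ Bhat S
      = {φ : ℝ | 0 ≤ φ} ∩ SprimeKM Q m g W Bφ Bhat S := by
  ext φ
  have hB : Bφ φ = Bhat ∨ ∃ ψ : ℝ, Bφ φ = Bφ ψ := Or.inr ⟨φ, rfl⟩
  exact and_congr_right fun _ => assignments_agree_iff Q m g W (Bφ φ) Bhat S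
    (hmsucc _ hB) (hgmin _ hB) (huniq _ hB) hW

/-- **Theorem 3.2.** The truncation set `S = {φ ≥ 0 : all k-means
assignments of B(φ) through iteration S agree with those of B̂}` is exactly the
intersection of `{φ ≥ 0}` with the initial-centroid inequalities and the
iterated weighted-centroid inequalities. -/
theorem kmeans_truncation_set_characterization
    (N T p K : ℕ) (hN : 0 < N) (hT : 0 < T) (hp : 0 < p) (hK : 0 < K)
    (x : Fin N → Matrix (Fin T) (Fin p) ℝ)
    (Q : Fin N → Matrix (Fin p) (Fin p) ℝ)
    (hQdef : ∀ i, Q i = (x i)ᵀ * x i) (hQpd : ∀ i, (Q i).PosDef)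
    (cseed : Fin K → Fin N)
    (m : ℕ → (Fin N × Fin p → ℝ) → Fin K → Fin p → ℝ)
    (g : ℕ → (Fin N × Fin p → ℝ) → Fin N → Fin K)
    (Bφ : ℝ → Fin N × Fin p → ℝ)
    (Bhat : Fin N × Fin p → ℝ)
    (S : ℕ) (hS : 1 ≤ S)
    -- initial centroids are the blocks at the seed indices
    (hm0 : ∀ B : Fin N × Fin p → ℝ, (B = Bhat ∨ ∃ φ : ℝ, B = Bφ φ) →
      ∀ k : Fin K, m 0 B k = blk B (cseed k))
    -- centroid update rule
    (hmsucc : ∀ B : Fin N × Fin p → ℝ, (B = Bhat ∨ ∃ φ : ℝ, B = Bφ φ) →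
      ∀ (s : ℕ) (k : Fin K),
        m (s + 1) B k
          = (∑ i ∈ Finset.univ.filter (fun i => g s B i = k), Q i)⁻¹ *ᵥ
              (∑ i ∈ Finset.univ.filter (fun i => g s B i = k), Q i *ᵥ blk B i))
    -- `g s B i` minimizes the weighted distance to the step-`s` centroids
    (hgmin : ∀ B : Fin N × Fin p → ℝ, (B = Bhat ∨ ∃ φ : ℝ, B = Bφ φ) →
      ∀ s ≤ S, ∀ (i : Fin N) (k : Fin K),
        qnorm (Q i) (blk B i - m s B (g s B i)) ≤ qnorm (Q i) (blk B i - m s B k))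
    -- the minimizing index is unique at every iteration `0 ≤ s ≤ S`
    (huniq : ∀ B : Fin N × Fin p → ℝ, (B = Bhat ∨ ∃ φ : ℝ, B = Bφ φ) →
      ∀ s ≤ S, ∀ i : Fin N, ∃! k : Fin K, ∀ k₂ : Fin K,
        qnorm (Q i) (blk B i - m s B k) ≤ qnorm (Q i) (blk B i - m s B k₂))
    -- the cluster Gram-sum matrices are invertible
    (hinv : ∀ B : Fin N × Fin p → ℝ, (B = Bhat ∨ ∃ φ : ℝ, B = Bφ φ) →
      ∀ s < S, ∀ k : Fin K,
        IsUnit (∑ i ∈ Finset.univ.filter (fun i => g s B i = k), Q i).det)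
    -- the weight matrices computed from the clusters of `B̂`
    (W : ℕ → Fin K → Fin N → Matrix (Fin p) (Fin p) ℝ)
    (hW : ∀ (s : ℕ) (k : Fin K) (i : Fin N),
      W s k i = if g s Bhat i = k
        then (∑ j ∈ Finset.univ.filter (fun j => g s Bhat j = k), Q j)⁻¹ * Q i else 0) :
    {φ : ℝ | 0 ≤ φ} ∩ SsetKM g Bφ Bhat S
      = {φ : ℝ | 0 ≤ φ} ∩ SprimeKM Q m g W Bφ Bhat S :=
  kmeans_truncation_set_characterization_general N p K Q m g Bφ Bhat S hmsucc hgmin huniq W hW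

end
end
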